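/- Let b ≥ 2 be an integer, j ∈ ℕ_0, m ∈ {0,...,b^j−1}, l ∈ {1,...,b−1}, and α ∈ ℕ_0 with base-b digit sequence (α_0, α_1, ...). If the number of base-b digits ρ(α) equals j+1 and the leading digit α_j equals l, then |⟨h_{jml}, wal_α⟩| = b^{−j}; if ρ(α) ≠ j+1 or α_j ≠ l (with j ≥ 0), then ⟨h_{jml}, wal_α⟩ = 0. -/

import Mathlib

open MeasureTheory

/-- Number of base-`b` digits of `α` (the NRT weight): `ρ(0) = 0`. -/
def nrtWeight (b α : ℕ) : ℕ := if α = 0 then 0 else Nat.log b α + 1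

/-- The `α`-th `b`-adic Walsh function on `[0,1)`. -/
noncomputable def walsh (b α : ℕ) (x : ℝ) : ℂ :=
  Complex.exp (2 * Real.pi * Complex.I / b *
    ∑ k ∈ Finset.range (nrtWeight b α),
      ((α / b ^ k % b : ℕ) : ℂ) * ((⌊(b : ℝ) ^ (k + 1) * x⌋ % b : ℤ) : ℂ))

/-- The `b`-adic Haar function on `[0,1)` of level `j`, position `m`, frequency `l`. -/
noncomputable def badicHaar (b j m l : ℕ) (x : ℝ) : ℂ :=
  if x ∈ Set.Ico ((m : ℝ) / (b : ℝ) ^ j) (((m : ℝ) + 1) / (b : ℝ) ^ j) then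
    Complex.exp (2 * Real.pi * Complex.I * (l : ℂ) *
      (((⌊(b : ℝ) ^ (j + 1) * x⌋ - (b : ℤ) * m : ℤ) : ℂ)) / (b : ℂ))
  else 0

/-!
Both `h_{jml}` and `wal_α` are constant on the `b`-adic intervals of level
`N = max (j + 1) ρ(α)`, so the inner product is `b⁻ᴺ` times a sum over `t < bᴺ`. Writing
`t = b u + r` with `r` the last digit, the Haar factor depends on `r` only when `N = j + 1`, and the
conjugated Walsh factor picks up `ω^(-α_{N-1} r)` with `ω = e^{2πi/b}`. The sum over `r` is thus a
full sum of powers of `ω`: `∑ ω^((l - α_j) r)` if `N = j + 1`, and `∑ ω^(-α_{ρ-1} r)` with a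
nonzero leading digit `α_{ρ-1}` if `ρ ≥ j + 2`. It equals `b` exactly when `ρ = j + 1` and
`α_j = l`, and vanishes otherwise.
-/

open Complex Finset
open scoped Real ComplexConjugate

section
variable {E : Type*} [NormedAddCommGroup E]

lemma intervalIntegrable_natFloor_succ (F : ℕ → E) (k : ℕ) :
    IntervalIntegrable (fun y : ℝ => F ⌊y⌋₊) volume k (k + 1 : ℕ) := by
  refine (intervalIntegrable_const (c := F k)).congr_uIoo fun y hy => ?_
  rw [Set.uIoo_of_le (by simp)] at hy
  simp only [Nat.floor_eq_on_Ico k y ⟨hy.1.le, by simpa using hy.2⟩]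

variable [NormedSpace ℝ E] [CompleteSpace E]

lemma intervalIntegral_natFloor_succ (F : ℕ → E) (k : ℕ) :
    ∫ y in (k : ℝ)..((k + 1 : ℕ) : ℝ), F ⌊y⌋₊ = F k := by
  have hfloor : Set.EqOn (fun y : ℝ => F ⌊y⌋₊) (fun _ => F k) (Set.uIoo k (k + 1 : ℕ)) := by
    intro y hy
    rw [Set.uIoo_of_le (by simp)] at hy
    simp only [Nat.floor_eq_on_Ico k y ⟨hy.1.le, by simpa using hy.2⟩]
  rw [intervalIntegral.integral_congr_uIoo hfloor, intervalIntegral.integral_const]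
  simp

lemma setIntegral_Ico_natFloor_mul (F : ℕ → E) {M : ℕ} (hM : 0 < M) :
    ∫ x in Set.Ico (0 : ℝ) 1, F ⌊(M : ℝ) * x⌋₊ = (M : ℝ)⁻¹ • ∑ t ∈ range M, F t := by
  rw [integral_Ico_eq_integral_Ioo, ← integral_Ioc_eq_integral_Ioo,
    ← intervalIntegral.integral_of_le zero_le_one,
    intervalIntegral.integral_comp_mul_left (fun y => F ⌊y⌋₊) (by positivity), mul_zero, mul_one]
  have hsum := intervalIntegral.sum_integral_adjacent_intervals (a := Nat.cast) (n := M)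
    fun k _ => intervalIntegrable_natFloor_succ F k
  rw [Nat.cast_zero] at hsum
  simp only [← hsum, intervalIntegral_natFloor_succ]

end

lemma sum_range_mul_eq_sum_sum {M : Type*} [AddCommMonoid M] (B n : ℕ) (f : ℕ → M) :
    ∑ t ∈ range (B * n), f t = ∑ q ∈ range n, ∑ r ∈ range B, f (B * q + r) := by
  induction n with
  | zero => simp
  | succ n ih => rw [Nat.mul_succ, sum_range_add, ih, sum_range_succ]

lemma sum_range_exp_two_pi_I_mul_div (b : ℕ) (c : ℤ) :
    ∑ r ∈ range b, exp (2 * π * I * c * r / b) = if (b : ℤ) ∣ c then (b : ℂ) else 0 := by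
  rcases Nat.eq_zero_or_pos b with rfl | hb
  · simp
  have hb0 : (b : ℂ) ≠ 0 := by exact_mod_cast hb.ne'
  set z := exp (2 * π * I * c / b) with hz_def
  have hpow : ∀ r : ℕ, exp (2 * π * I * c * r / b) = z ^ r := fun r => by
    rw [← Complex.exp_nat_mul]; ring_nf
  simp only [hpow]
  split_ifs with hc
  · obtain ⟨n, rfl⟩ := hc
    have hz : z = 1 := by
      rw [hz_def, show 2 * π * I * ((b * n : ℤ) : ℂ) / b = n * (2 * π * I) by push_cast; field_simp]
      exact Complex.exp_int_mul_two_pi_mul_I n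
    simp [hz]
  · have hz1 : z ≠ 1 := by
      rw [Ne, Complex.exp_eq_one_iff]
      rintro ⟨n, hn⟩
      apply hc
      refine ⟨n, ?_⟩
      field_simp at hn
      exact_mod_cast hn
    have hzb : z ^ b = 1 := by
      rw [← Complex.exp_nat_mul, show (b : ℂ) * (2 * π * I * c / b) = c * (2 * π * I) by
        field_simp]
      exact Complex.exp_int_mul_two_pi_mul_I c
    rw [geom_sum_eq hz1, hzb, sub_self, zero_div]

lemma lt_pow_nrtWeight {b : ℕ} (hb : 1 < b) (α : ℕ) : α < b ^ nrtWeight b α := by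
  unfold nrtWeight
  split_ifs with h
  · simp [h]
  · exact Nat.lt_pow_succ_log_self hb α

lemma div_pow_eq_zero_of_nrtWeight_le {b α k : ℕ} (hb : 1 < b) (hk : nrtWeight b α ≤ k) :
    α / b ^ k = 0 :=
  Nat.div_eq_of_lt ((lt_pow_nrtWeight hb α).trans_le (Nat.pow_le_pow_right (by omega) hk))

lemma div_pow_mod_ne_zero_of_nrtWeight_eq {b α N : ℕ} (hb : 1 < b)
    (hN : nrtWeight b α = N + 1) : α / b ^ N % b ≠ 0 := by
  have hα : α ≠ 0 := by rintro rfl; simp [nrtWeight] at hN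
  have hlog : Nat.log b α = N := by simpa [nrtWeight, hα] using hN
  have hlt : α / b ^ N < b := by
    rw [Nat.div_lt_iff_lt_mul (by positivity), ← pow_succ', ← hlog]
    exact Nat.lt_pow_succ_log_self hb α
  rw [Nat.mod_eq_of_lt hlt]
  exact (Nat.div_pos (hlog ▸ Nat.pow_log_le_self b hα) (by positivity)).ne'

lemma mul_add_div_pow_succ {b r : ℕ} (hr : r < b) (u n : ℕ) :
    (b * u + r) / b ^ (n + 1) = u / b ^ n := by
  rw [pow_succ', ← Nat.div_div_eq_div_mul, Nat.mul_add_div (by omega), Nat.div_eq_of_lt hr,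
    add_zero]

lemma natFloor_pow_mul_div_pow {b K N : ℕ} (hb : b ≠ 0) (hKN : K ≤ N) (x : ℝ) :
    ⌊(b : ℝ) ^ N * x⌋₊ / b ^ (N - K) = ⌊(b : ℝ) ^ K * x⌋₊ := by
  rw [← Nat.floor_div_natCast, Nat.cast_pow, ← Nat.add_sub_cancel' hKN, pow_add,
    Nat.add_sub_cancel_left]
  field_simp

lemma floor_pow_mul_eq_natFloor_div {b K N : ℕ} (hb : b ≠ 0) (hKN : K ≤ N) {x : ℝ} (hx : 0 ≤ x) :
    ⌊(b : ℝ) ^ K * x⌋ = ((⌊(b : ℝ) ^ N * x⌋₊ / b ^ (N - K) : ℕ) : ℤ) := by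
  rw [natFloor_pow_mul_div_pow hb hKN, Int.natCast_floor_eq_floor (by positivity)]

/-- The value of `walsh b α` on `[t / b ^ N, (t + 1) / b ^ N)` when `nrtWeight b α ≤ N`. -/
noncomputable def walshStep (b α N t : ℕ) : ℂ :=
  exp (2 * π * I * (∑ k ∈ range N, α / b ^ k % b * (t / b ^ (N - (k + 1)) % b) : ℕ) / b)

/-- The value of `badicHaar b j m l` on `[t / b ^ N, (t + 1) / b ^ N)` when `j < N`. -/
noncomputable def haarStep (b j m l N t : ℕ) : ℂ :=
  if t / b ^ (N - j) = m then exp (2 * π * I * l * (t / b ^ (N - (j + 1)) % b : ℕ) / b) else 0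

section
variable {b : ℕ}

lemma walsh_eq_walshStep (hb : 1 < b) {α N : ℕ} (hN : nrtWeight b α ≤ N) {x : ℝ} (hx : 0 ≤ x) :
    walsh b α x = walshStep b α N ⌊(b : ℝ) ^ N * x⌋₊ := by
  have hsum : ∑ k ∈ range (nrtWeight b α),
      ((α / b ^ k % b : ℕ) : ℂ) * ((⌊(b : ℝ) ^ (k + 1) * x⌋ % b : ℤ) : ℂ) =
      ∑ k ∈ range N, ((α / b ^ k % b : ℕ) : ℂ) *
        ((⌊(b : ℝ) ^ N * x⌋₊ / b ^ (N - (k + 1)) % b : ℕ) : ℂ) := by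
    refine sum_subset_zero_on_sdiff (range_subset_range.2 hN) (fun k hk => ?_) fun k hk => ?_
    · rw [mem_sdiff, mem_range, mem_range, not_lt] at hk
      simp [div_pow_eq_zero_of_nrtWeight_le hb hk.2]
    · have hkN : k + 1 ≤ N := by have := mem_range.1 (range_subset_range.2 hN hk); omega
      rw [floor_pow_mul_eq_natFloor_div (by omega) hkN hx, ← Int.natCast_mod, Int.cast_natCast]
  rw [walsh, walshStep, hsum]
  push_cast
  ring_nf

lemma badicHaar_eq_haarStep (hb : b ≠ 0) {j m l N : ℕ} (hjN : j < N) {x : ℝ} (hx : 0 ≤ x) :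
    badicHaar b j m l x = haarStep b j m l N ⌊(b : ℝ) ^ N * x⌋₊ := by
  have hbj : (0 : ℝ) < (b : ℝ) ^ j := by positivity
  have hmem : x ∈ Set.Ico ((m : ℝ) / (b : ℝ) ^ j) (((m : ℝ) + 1) / (b : ℝ) ^ j) ↔
      ⌊(b : ℝ) ^ N * x⌋₊ / b ^ (N - j) = m := by
    rw [natFloor_pow_mul_div_pow hb hjN.le, Nat.floor_eq_iff (by positivity), Set.mem_Ico,
      div_le_iff₀ hbj, lt_div_iff₀ hbj, mul_comm x]
  set s := ⌊(b : ℝ) ^ N * x⌋₊ / b ^ (N - (j + 1))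
  rw [badicHaar, haarStep]
  by_cases h : ⌊(b : ℝ) ^ N * x⌋₊ / b ^ (N - j) = m
  · rw [if_pos (hmem.2 h), if_pos h, floor_pow_mul_eq_natFloor_div hb hjN hx]
    have hsm : s / b = m := by
      rw [← h, Nat.div_div_eq_div_mul, ← pow_succ]; congr 2; omega
    have hdigit : ((s : ℤ) - b * m : ℤ) = ((s % b : ℕ) : ℤ) := by
      rw [← hsm]; push_cast; rw [Int.emod_def]
    rw [hdigit, Int.cast_natCast]
  · rw [if_neg (mt hmem.1 h), if_neg h]

lemma walshStep_succ_mul_add {r : ℕ} (hr : r < b) (α N u : ℕ) :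
    walshStep b α (N + 1) (b * u + r) =
      walshStep b α N u * exp (2 * π * I * (α / b ^ N % b : ℕ) * r / b) := by
  have hdigits : ∀ k ∈ range N, α / b ^ k % b * ((b * u + r) / b ^ (N + 1 - (k + 1)) % b) =
      α / b ^ k % b * (u / b ^ (N - (k + 1)) % b) := fun k hk => by
    rw [show N + 1 - (k + 1) = N - (k + 1) + 1 by have := mem_range.1 hk; omega,
      mul_add_div_pow_succ hr]
  rw [walshStep, walshStep, ← exp_add, sum_range_succ, sum_congr rfl hdigits, Nat.sub_self,
    pow_zero, Nat.div_one, Nat.mul_add_mod, Nat.mod_eq_of_lt hr]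
  push_cast
  ring_nf

lemma haarStep_succ_mul_add {r : ℕ} (hr : r < b) {j N : ℕ} (hjN : j < N) (m l u : ℕ) :
    haarStep b j m l (N + 1) (b * u + r) = haarStep b j m l N u := by
  rw [haarStep, haarStep, show N + 1 - j = N - j + 1 by omega,
    show N + 1 - (j + 1) = N - (j + 1) + 1 by omega, mul_add_div_pow_succ hr,
    mul_add_div_pow_succ hr]

lemma haarStep_succ_self_mul_add {r : ℕ} (hr : r < b) (j m l u : ℕ) :
    haarStep b j m l (j + 1) (b * u + r) = if u = m then exp (2 * π * I * l * r / b) else 0 := by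
  rw [haarStep, Nat.add_sub_cancel_left, Nat.sub_self, pow_one, pow_zero, Nat.div_one,
    Nat.mul_add_div (by omega), Nat.div_eq_of_lt hr, add_zero, Nat.mul_add_mod,
    Nat.mod_eq_of_lt hr]

lemma norm_walshStep (α N t : ℕ) : ‖walshStep b α N t‖ = 1 := by
  rw [walshStep, norm_exp]
  simp

lemma conj_walshStep_succ_mul_add {r : ℕ} (hr : r < b) (α N u : ℕ) :
    conj (walshStep b α (N + 1) (b * u + r)) =
      conj (walshStep b α N u) * exp (2 * π * I * (-(α / b ^ N % b : ℕ) : ℤ) * r / b) := by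
  rw [walshStep_succ_mul_add hr, map_mul, ← exp_conj]
  congr 2
  simp only [map_mul, map_div₀, conj_I, conj_ofReal, map_natCast, map_ofNat, Int.cast_neg,
    Int.cast_natCast]
  ring

lemma sum_haarStep_mul_conj_walshStep_succ_self {j m : ℕ} (hm : m < b ^ j) (l α : ℕ) :
    ∑ t ∈ range (b ^ (j + 1)), haarStep b j m l (j + 1) t * conj (walshStep b α (j + 1) t) =
      conj (walshStep b α j m) *
        ∑ r ∈ range b, exp (2 * π * I * ((l : ℤ) - (α / b ^ j % b : ℕ) : ℤ) * r / b) := by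
  rw [pow_succ', sum_range_mul_eq_sum_sum, sum_eq_single_of_mem m (mem_range.2 hm)]
  · rw [mul_sum]
    refine sum_congr rfl fun r hr => ?_
    rw [haarStep_succ_self_mul_add (mem_range.1 hr), if_pos rfl,
      conj_walshStep_succ_mul_add (mem_range.1 hr), mul_left_comm, ← exp_add]
    congr 2
    push_cast
    ring
  · intro u _ hu
    refine sum_eq_zero fun r hr => ?_
    rw [haarStep_succ_self_mul_add (mem_range.1 hr), if_neg hu, zero_mul]

lemma sum_haarStep_mul_conj_walshStep_eq_zero {j N : ℕ} (hjN : j < N) {α : ℕ}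
    (hα : α / b ^ N % b ≠ 0) (m l : ℕ) :
    ∑ t ∈ range (b ^ (N + 1)), haarStep b j m l (N + 1) t * conj (walshStep b α (N + 1) t) =
      0 := by
  have hb : 0 < b := Nat.pos_of_ne_zero fun h => hα (by simp [h, show N ≠ 0 by omega])
  rw [pow_succ', sum_range_mul_eq_sum_sum]
  refine sum_eq_zero fun u _ => ?_
  have hterm : ∀ r ∈ range b,
      haarStep b j m l (N + 1) (b * u + r) * conj (walshStep b α (N + 1) (b * u + r)) =
        haarStep b j m l N u * conj (walshStep b α N u) *
          exp (2 * π * I * (-(α / b ^ N % b : ℕ) : ℤ) * r / b) := fun r hr => by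
    rw [haarStep_succ_mul_add (mem_range.1 hr) hjN, conj_walshStep_succ_mul_add (mem_range.1 hr),
      ← mul_assoc]
  have hndvd : ¬ (b : ℤ) ∣ (-(α / b ^ N % b : ℕ) : ℤ) := by
    rw [Int.dvd_neg]
    exact_mod_cast Nat.not_dvd_of_pos_of_lt (Nat.pos_of_ne_zero hα) (Nat.mod_lt _ hb)
  rw [sum_congr rfl hterm, ← mul_sum, sum_range_exp_two_pi_I_mul_div, if_neg hndvd, mul_zero]

lemma setIntegral_badicHaar_mul_conj_walsh (hb : 1 < b) {j N α : ℕ} (hjN : j < N)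
    (hαN : nrtWeight b α ≤ N) (m l : ℕ) :
    ∫ x in Set.Ico (0 : ℝ) 1, badicHaar b j m l x * conj (walsh b α x) =
      ((b : ℝ) ^ N)⁻¹ • ∑ t ∈ range (b ^ N), haarStep b j m l N t * conj (walshStep b α N t) := by
  have hstep : ∀ x ∈ Set.Ico (0 : ℝ) 1, badicHaar b j m l x * conj (walsh b α x) =
      haarStep b j m l N ⌊((b ^ N : ℕ) : ℝ) * x⌋₊ *
        conj (walshStep b α N ⌊((b ^ N : ℕ) : ℝ) * x⌋₊) := fun x hx => by
    rw [Nat.cast_pow, badicHaar_eq_haarStep (by omega) hjN hx.1, walsh_eq_walshStep hb hαN hx.1]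
  rw [setIntegral_congr_fun measurableSet_Ico hstep,
    setIntegral_Ico_natFloor_mul (fun t => haarStep b j m l N t * conj (walshStep b α N t))
      (by positivity), Nat.cast_pow]

end

theorem haar_walsh_inner_product (b j m l : ℕ) (hb : 2 ≤ b) (hm : m < b ^ j)
    (hl : 1 ≤ l ∧ l < b) (α : ℕ) :
    (nrtWeight b α = j + 1 ∧ α / b ^ j % b = l →
      ‖∫ x in Set.Ico (0 : ℝ) 1,
          badicHaar b j m l x * (starRingEnd ℂ) (walsh b α x)‖ = (b : ℝ) ^ (-(j : ℤ)))
    ∧ ((nrtWeight b α ≠ j + 1 ∨ α / b ^ j % b ≠ l) →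
      ∫ x in Set.Ico (0 : ℝ) 1,
          badicHaar b j m l x * (starRingEnd ℂ) (walsh b α x) = 0) := by
  obtain ⟨hl1, hlb⟩ := hl
  by_cases hρ : nrtWeight b α ≤ j + 1
  · rw [setIntegral_badicHaar_mul_conj_walsh hb (Nat.lt_succ_self j) hρ,
      sum_haarStep_mul_conj_walshStep_succ_self hm, sum_range_exp_two_pi_I_mul_div]
    have hdvd : (b : ℤ) ∣ ((l : ℤ) - (α / b ^ j % b : ℕ)) ↔ α / b ^ j % b = l := by
      rw [← Nat.modEq_iff_dvd]
      exact ⟨fun h => h.eq_of_lt_of_lt (Nat.mod_lt _ (by omega)) hlb, fun h => h ▸ rfl⟩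
    refine ⟨fun ⟨_, hd⟩ => ?_, fun h => ?_⟩
    · rw [if_pos (hdvd.2 hd), norm_smul, norm_mul, RCLike.norm_conj, norm_walshStep,
        Complex.norm_natCast, norm_inv, norm_pow, Real.norm_natCast, zpow_neg, zpow_natCast,
        pow_succ]
      field_simp
    · have hd : α / b ^ j % b ≠ l := by
        rcases h with hρj | hd
        · rw [div_pow_eq_zero_of_nrtWeight_le hb (by omega : nrtWeight b α ≤ j), Nat.zero_mod]
          omega
        · exact hd
      rw [if_neg (mt hdvd.1 hd), mul_zero, smul_zero]
  · obtain ⟨N, hN⟩ : ∃ N, nrtWeight b α = N + 1 := ⟨nrtWeight b α - 1, by omega⟩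
    rw [setIntegral_badicHaar_mul_conj_walsh hb (by omega : j < N + 1) hN.le,
      sum_haarStep_mul_conj_walshStep_eq_zero (by omega)
        (div_pow_mod_ne_zero_of_nrtWeight_eq hb hN), smul_zero]
    exact ⟨fun h => absurd h.1 (by omega), fun _ => rfl⟩
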